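/- There exists a finite simple connected graph G with at least two vertices such that μ(G) > max over all pairs of adjacent vertices v_i ~ v_j of G of (m_i + m_j)·(d_i·m_i + d_j·m_j)/(2·m_i·m_j). (This disproves conjectured edge-maximum bound 65 of Brankov, Hansen and Stevanović.) -/

import Mathlib

/-!
The counterexample is the star `K_{1,10}` with every edge subdivided. Its centre has `d = 10`,
`m = 2`, the ten middle vertices have `d = 2`, `m = 11/2` and the leaves have `d = 1`, `m = 2`, so
the bound is largest on the centre–middle edges, where it equals `465/44 < 10.6`. The Rayleigh
quotient of the vector that is `-10` at the centre, `1` on the middle vertices and `0` on the leaves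
is `1220/110 = 122/11 > 11`, and the Rayleigh quotient of any vector is at most `μ`.
-/

noncomputable section

open Finset

/-- The degree of a vertex, as a real number. -/
def degR {V : Type*} [Fintype V] (G : SimpleGraph V) (v : V) : ℝ :=
  letI := Classical.decRel G.Adj
  (G.degree v : ℝ)

/-- The average degree of the neighbours of a vertex, as a real number:
`m_v = (∑_{u ~ v} d_u) / d_v`. -/
def avgDegR {V : Type*} [Fintype V] (G : SimpleGraph V) (v : V) : ℝ :=
  letI := Classical.decRel G.Adj
  (∑ u ∈ G.neighborFinset v, (G.degree u : ℝ)) / (G.degree v : ℝ)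

/-- The largest eigenvalue of the Laplacian matrix `L = D - A` of a finite graph. -/
def lapSpecRad {V : Type*} [Fintype V] [DecidableEq V] [Nonempty V]
    (G : SimpleGraph V) : ℝ :=
  letI := Classical.decRel G.Adj
  ⨆ i, (SimpleGraph.posSemidef_lapMatrix ℝ G).isHermitian.eigenvalues i

open Matrix
open scoped ComplexOrder

lemma Matrix.IsHermitian.posSemidef_smul_one_sub {n 𝕜 : Type*} [Fintype n] [DecidableEq n]
    [RCLike 𝕜] {A : Matrix n n 𝕜} (hA : A.IsHermitian) {c : ℝ}
    (hc : ∀ i, hA.eigenvalues i ≤ c) : ((c : 𝕜) • 1 - A).PosSemidef := by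
  set U : Matrix n n 𝕜 := (hA.eigenvectorUnitary : Matrix n n 𝕜)
  have hUU : U * star U = 1 := Unitary.mul_star_self_of_mem hA.eigenvectorUnitary.2
  have hdiag : (c : 𝕜) • 1 - A =
      U * diagonal (fun i => ((c - hA.eigenvalues i : ℝ) : 𝕜)) * star U := by
    conv_lhs => rw [hA.spectral_theorem, Unitary.conjStarAlgAut_apply, ← hUU]
    simp only [RCLike.ofReal_sub, ← diagonal_sub, ← smul_one_eq_diagonal]
    rw [mul_sub, sub_mul, Matrix.mul_smul, mul_one, Matrix.smul_mul]
    rfl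
  rw [hdiag, Unitary.isUnit_coe.posSemidef_star_right_conjugate_iff]
  exact PosSemidef.diagonal fun i => by simpa using hc i

namespace SimpleGraph

variable {V : Type*} [Fintype V] (G : SimpleGraph V) [DecidableRel G.Adj]

lemma degR_eq_degree (v : V) : degR G v = G.degree v := by
  unfold degR
  congr!

lemma avgDegR_eq (v : V) :
    avgDegR G v = ((∑ u ∈ G.neighborFinset v, G.degree u : ℕ) : ℝ) / G.degree v := by
  unfold avgDegR
  push_cast
  congr!

lemma dotProduct_lapMatrix_mulVec_le_lapSpecRad [DecidableEq V] [Nonempty V] (x : V → ℝ) :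
    x ⬝ᵥ (G.lapMatrix ℝ *ᵥ x) ≤ lapSpecRad G * (x ⬝ᵥ x) := by
  obtain rfl : ‹DecidableRel G.Adj› = Classical.decRel G.Adj := Subsingleton.elim _ _
  let _ := Classical.decRel G.Adj
  unfold lapSpecRad
  set hL := (posSemidef_lapMatrix ℝ G).isHermitian
  have hle : ∀ i, hL.eigenvalues i ≤ ⨆ j, hL.eigenvalues j :=
    le_ciSup (Set.finite_range _).bddAbove
  have hnonneg := ((hL.posSemidef_smul_one_sub hle).dotProduct_mulVec_nonneg x)
  simp only [sub_mulVec, smul_mulVec, one_mulVec, dotProduct_sub, dotProduct_smul, star_trivial,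
    RCLike.ofReal_real_eq_id, id, smul_eq_mul, sub_nonneg] at hnonneg
  exact hnonneg

lemma intCast_dotProduct_lapMatrix_mulVec_le_lapSpecRad [DecidableEq V] [Nonempty V]
    (y : V → ℤ) :
    ((y ⬝ᵥ (G.lapMatrix ℤ *ᵥ y) : ℤ) : ℝ) ≤ lapSpecRad G * ((y ⬝ᵥ y : ℤ) : ℝ) := by
  have h := G.dotProduct_lapMatrix_mulVec_le_lapSpecRad fun v => (y v : ℝ)
  simp only [dotProduct, lapMatrix_mulVec_apply] at h ⊢
  push_cast
  exact h

end SimpleGraph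

open SimpleGraph

/-- The `i`-th arm of the subdivided star is the path `none – some (i, false) – some (i, true)`. -/
def subdividedStarAdj {k : ℕ} : Option (Fin k × Bool) → Option (Fin k × Bool) → Bool
  | none, some (_, false) => true
  | some (i, false), some (j, true) => i == j
  | _, _ => false

def subdividedStar (k : ℕ) : SimpleGraph (Option (Fin k × Bool)) :=
  SimpleGraph.fromRel fun a b => subdividedStarAdj a b

instance (k : ℕ) : DecidableRel (subdividedStar k).Adj := fun a b =>
  inferInstanceAs (Decidable (a ≠ b ∧ (_ ∨ _)))

lemma subdividedStar_connected (k : ℕ) : (subdividedStar k).Connected := by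
  have hmiddle (i : Fin k) : (subdividedStar k).Reachable none (some (i, false)) :=
    Adj.reachable (by simp [subdividedStar, subdividedStarAdj])
  refine (connected_iff_exists_forall_reachable _).mpr ⟨none, ?_⟩
  rintro (_ | ⟨i, _ | _⟩)
  · rfl
  · exact hmiddle i
  · exact (hmiddle i).trans (Adj.reachable (by simp [subdividedStar, subdividedStarAdj]))

lemma subdividedStar_adj_cases {k : ℕ} {u v : Option (Fin k × Bool)}
    (h : (subdividedStar k).Adj u v) :
    (∃ i, u = none ∧ v = some (i, false)) ∨ (∃ i, u = some (i, false) ∧ v = none) ∨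
      (∃ i, u = some (i, false) ∧ v = some (i, true)) ∨
      (∃ i, u = some (i, true) ∧ v = some (i, false)) := by
  revert u v
  rintro (_ | ⟨i, _ | _⟩) (_ | ⟨j, _ | _⟩) h <;> simp_all [subdividedStar, subdividedStarAdj]

lemma subdividedStar_centre :
    (subdividedStar 10).degree none = 10 ∧
      ∑ u ∈ (subdividedStar 10).neighborFinset none, (subdividedStar 10).degree u = 20 := by
  decide

lemma subdividedStar_middle (i : Fin 10) :
    (subdividedStar 10).degree (some (i, false)) = 2 ∧
      ∑ u ∈ (subdividedStar 10).neighborFinset (some (i, false)),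
        (subdividedStar 10).degree u = 11 := by
  revert i
  decide

lemma subdividedStar_leaf (i : Fin 10) :
    (subdividedStar 10).degree (some (i, true)) = 1 ∧
      ∑ u ∈ (subdividedStar 10).neighborFinset (some (i, true)),
        (subdividedStar 10).degree u = 2 := by
  revert i
  decide

def subdividedStarTestVector : Option (Fin 10 × Bool) → ℤ
  | none => -10
  | some (_, false) => 1
  | some (_, true) => 0

lemma le_lapSpecRad_subdividedStar : (122 / 11 : ℝ) ≤ lapSpecRad (subdividedStar 10) := by
  have hrayleigh := (subdividedStar 10).intCast_dotProduct_lapMatrix_mulVec_le_lapSpecRad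
    subdividedStarTestVector
  rw [show subdividedStarTestVector ⬝ᵥ ((subdividedStar 10).lapMatrix ℤ *ᵥ
      subdividedStarTestVector) = 1220 by decide,
    show subdividedStarTestVector ⬝ᵥ subdividedStarTestVector = 110 by decide] at hrayleigh
  norm_num at hrayleigh
  linarith

/-- There exists a finite simple connected graph `G` with at least two vertices whose
Laplacian spectral radius exceeds the conjectured edge-maximum bound. -/
theorem exists_counterexample_bound65 :
    ∃ (V : Type) (_ : Fintype V) (_ : DecidableEq V) (_ : Nonempty V)
      (G : SimpleGraph V), G.Connected ∧ 2 ≤ Fintype.card V ∧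
      ∀ i j : V, G.Adj i j →
        (fun di mi dj mj => (mi + mj) * (di * mi + dj * mj) / (2 * mi * mj))
          (degR G i) (avgDegR G i) (degR G j) (avgDegR G j) < lapSpecRad G := by
  refine ⟨_, inferInstance, inferInstance, inferInstance, subdividedStar 10,
    subdividedStar_connected 10, by decide, ?_⟩
  have hμ := le_lapSpecRad_subdividedStar
  intro u v huv
  rcases subdividedStar_adj_cases huv with
    ⟨i, rfl, rfl⟩ | ⟨i, rfl, rfl⟩ | ⟨i, rfl, rfl⟩ | ⟨i, rfl, rfl⟩ <;>
  · simp only [degR_eq_degree, avgDegR_eq, subdividedStar_centre, subdividedStar_middle,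
      subdividedStar_leaf]
    norm_num
    linarith
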